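/- In the abstract gradient-discretisation setting with the regularised-solver setting, for every i ≥ 1 one has the contraction estimate ‖e_i‖_X ≤ α·‖e_{i−1}‖_X, where α = (L − 1/L_ζ) / ( L·(L + δt/C²) )^{1/2} satisfies α < 1. -/

import Mathlib

/-- Weighted inner product `⟨u, v⟩_m = ∑ j, m j * u j * v j` on `X = B → ℝ`. -/
noncomputable def innerM {B : Type*} [Fintype B] (m : B → ℝ) (u v : B → ℝ) : ℝ :=
  ∑ j, m j * u j * v j

/-- Weighted norm `‖u‖_m = ⟨u, u⟩_m^{1/2}`. -/
noncomputable def normM {B : Type*} [Fintype B] (m : B → ℝ) (u : B → ℝ) : ℝ :=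
  Real.sqrt (innerM m u u)

/-- The dual norm `‖v‖_* = sup { ⟨v, w⟩_m : w ∈ X, ‖G w‖ = 1 }`. -/
noncomputable def dualNorm {B : Type*} [Fintype B] (m : B → ℝ)
    {F : Type*} [NormedAddCommGroup F] [InnerProductSpace ℝ F]
    (G : (B → ℝ) →ₗ[ℝ] F) (v : B → ℝ) : ℝ :=
  sSup {r : ℝ | ∃ w : B → ℝ, ‖G w‖ = 1 ∧ r = innerM m v w}

/-- The norm `‖w‖_X = ((L + δt/C²) ‖w‖_m² + δt ‖G w‖²)^{1/2}`. -/
noncomputable def normX {B : Type*} [Fintype B] (m : B → ℝ)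
    {F : Type*} [NormedAddCommGroup F] [InnerProductSpace ℝ F]
    (G : (B → ℝ) →ₗ[ℝ] F) (L δt C : ℝ) (w : B → ℝ) : ℝ :=
  Real.sqrt ((L + δt / C ^ 2) * normM m w ^ 2 + δt * ‖G w‖ ^ 2)

section Aux

variable {B : Type*} [Fintype B]

lemma innerM_sub_left (m : B → ℝ) (u u' φ : B → ℝ) :
    innerM m (fun j => u j - u' j) φ = innerM m u φ - innerM m u' φ := by
  unfold innerM
  rw [← Finset.sum_sub_distrib]
  exact Finset.sum_congr rfl fun j _ => by ring

lemma innerM_smul_left (m : B → ℝ) (c : ℝ) (u φ : B → ℝ) :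
    innerM m (fun j => c * u j) φ = c * innerM m u φ := by
  unfold innerM
  rw [Finset.mul_sum]
  exact Finset.sum_congr rfl fun j _ => by ring

lemma innerM_self_nonneg (m : B → ℝ) (hm : ∀ j, 0 ≤ m j) (u : B → ℝ) :
    0 ≤ innerM m u u :=
  Finset.sum_nonneg fun j _ => by
    rw [mul_assoc]; exact mul_nonneg (hm j) (mul_self_nonneg _)

lemma innerM_le_norm (m : B → ℝ) (hm : ∀ j, 0 ≤ m j) (u v : B → ℝ) :
    innerM m u v ≤ normM m u * normM m v := by
  have key : (innerM m u v) ^ 2 ≤ innerM m u u * innerM m v v := by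
    have h := Finset.sum_mul_sq_le_sq_mul_sq Finset.univ
      (fun j => Real.sqrt (m j) * u j) (fun j => Real.sqrt (m j) * v j)
    have e1 : ∑ j, (Real.sqrt (m j) * u j) * (Real.sqrt (m j) * v j) = innerM m u v :=
      Finset.sum_congr rfl fun j _ => by
        rw [show (Real.sqrt (m j) * u j) * (Real.sqrt (m j) * v j)
          = (Real.sqrt (m j) * Real.sqrt (m j)) * u j * v j by ring,
          Real.mul_self_sqrt (hm j)]
    have e2 : ∑ j, (Real.sqrt (m j) * u j) ^ 2 = innerM m u u :=
      Finset.sum_congr rfl fun j _ => by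
        rw [mul_pow, Real.sq_sqrt (hm j)]; ring
    have e3 : ∑ j, (Real.sqrt (m j) * v j) ^ 2 = innerM m v v :=
      Finset.sum_congr rfl fun j _ => by
        rw [mul_pow, Real.sq_sqrt (hm j)]; ring
    rw [e1, e2, e3] at h
    exact h
  calc innerM m u v ≤ |innerM m u v| := le_abs_self _
    _ = Real.sqrt ((innerM m u v) ^ 2) := (Real.sqrt_sq_eq_abs _).symm
    _ ≤ Real.sqrt (innerM m u u * innerM m v v) := Real.sqrt_le_sqrt key
    _ = normM m u * normM m v := Real.sqrt_mul (innerM_self_nonneg m hm u) _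

end Aux

set_option maxHeartbeats 1000000 in
/-- Lemma 3.2: one-step contraction of the regularised linear solver in the X-norm,
with contraction factor `α = (L - 1/L_ζ)/√(L (L + δt/C²)) < 1`. -/
theorem stmt_15 {B : Type*} [Fintype B] [Nonempty B] (m : B → ℝ) (hm : ∀ j, 0 < m j)
    {F : Type*} [NormedAddCommGroup F] [InnerProductSpace ℝ F]
    (G : (B → ℝ) →ₗ[ℝ] F) (hG : Function.Injective G)
    (δt Lζ L C : ℝ) (hδt : 0 < δt) (hLζ : 0 < Lζ) (hC : 0 < C)
    (Z : ℝ → ℝ) (hZ : Differentiable ℝ Z)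
    (hZ' : ∀ s : ℝ, 1 / Lζ ≤ deriv Z s ∧ deriv Z s ≤ L)
    (hpoin : ∀ w : B → ℝ, normM m w ≤ C * ‖G w‖)
    (b : (B → ℝ) →ₗ[ℝ] ℝ)
    (v : B → ℝ)
    (hv : ∀ φ : B → ℝ,
      innerM m (fun j => Z (v j)) φ + δt * (inner ℝ (G v) (G φ) : ℝ) = b φ)
    (vseq : ℕ → B → ℝ)
    (hit : ∀ i : ℕ, 1 ≤ i → ∀ φ : B → ℝ,
      L * innerM m (vseq i) φ + δt * (inner ℝ (G (vseq i)) (G φ) : ℝ)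
        = innerM m (fun j => L * vseq (i - 1) j - Z (vseq (i - 1) j)) φ + b φ) :
    (L - 1 / Lζ) / Real.sqrt (L * (L + δt / C ^ 2)) < 1 ∧
    ∀ i : ℕ, 1 ≤ i →
      normX m G L δt C (v - vseq i)
        ≤ ((L - 1 / Lζ) / Real.sqrt (L * (L + δt / C ^ 2)))
            * normX m G L δt C (v - vseq (i - 1)) := by
  have hm0 : ∀ j, 0 ≤ m j := fun j => (hm j).le
  have hLζ' : 0 < 1 / Lζ := by positivity
  have hL0 : 0 < L := lt_of_lt_of_le hLζ' (le_trans (hZ' 0).1 (hZ' 0).2)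
  set P : ℝ := δt / C ^ 2 with hPdef
  have hP : 0 < P := by positivity
  clear_value P
  set K : ℝ := L - 1 / Lζ with hKdef
  have hK0 : 0 ≤ K := by
    have := le_trans (hZ' 0).1 (hZ' 0).2
    simp only [hKdef]; linarith
  have hKL : K < L := by simp only [hKdef]; linarith
  have hLP : 0 < L * (L + P) := by positivity
  set S : ℝ := Real.sqrt (L * (L + P)) with hSdef
  have hS : 0 < S := Real.sqrt_pos.2 hLP
  have hS2 : S ^ 2 = L * (L + P) := Real.sq_sqrt hLP.le
  have hKS : K < S := by
    rw [hSdef, show K = Real.sqrt (K ^ 2) from (Real.sqrt_sq hK0).symm]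
    apply Real.sqrt_lt_sqrt (sq_nonneg _)
    nlinarith
  clear_value K S
  refine ⟨(div_lt_one hS).2 hKS, ?_⟩
  intro i hi
  set α : ℝ := K / S with hαdef
  have hα0 : 0 ≤ α := div_nonneg hK0 hS.le
  clear_value α
  set e : B → ℝ := v - vseq i with hedef
  set w : B → ℝ := v - vseq (i - 1) with hwdef
  -- Lipschitz property of x ↦ L x - Z x
  have hlip : ∀ x y : ℝ, |(L * x - Z x) - (L * y - Z y)| ≤ K * |x - y| := by
    intro x y
    have hdiff : ∀ z ∈ (Set.univ : Set ℝ), DifferentiableAt ℝ (fun x => L * x - Z x) z := by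
      intro z _
      exact ((differentiable_id.const_mul L).sub hZ) z
    have hbound : ∀ z ∈ (Set.univ : Set ℝ), ‖deriv (fun x => L * x - Z x) z‖ ≤ K := by
      intro z _
      have hd : HasDerivAt (fun x => L * x - Z x) (L * 1 - deriv Z z) z :=
        ((hasDerivAt_id z).const_mul L).sub (hZ z).hasDerivAt
      rw [hd.deriv, Real.norm_eq_abs, abs_of_nonneg (by linarith [(hZ' z).2])]
      have := (hZ' z).1
      simp only [hKdef]; linarith
    have := Convex.norm_image_sub_le_of_norm_deriv_le hdiff hbound convex_univ
      (Set.mem_univ y) (Set.mem_univ x)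
    simpa [Real.norm_eq_abs] using this
  set q : B → ℝ := fun j => L * w j - (Z (v j) - Z (vseq (i - 1) j)) with hqdef
  have hq : ∀ j, |q j| ≤ K * |w j| := by
    intro j
    have hwj : w j = v j - vseq (i - 1) j := rfl
    have : q j = (L * (v j) - Z (v j)) - (L * (vseq (i - 1) j) - Z (vseq (i - 1) j)) := by
      simp only [hqdef, hwj]; ring
    rw [this, hwj]
    exact hlip (v j) (vseq (i - 1) j)
  -- key identity
  have hkey : L * innerM m e e + δt * ‖G e‖ ^ 2 = innerM m q e := by
    have hGe : ‖G e‖ ^ 2 = (inner ℝ (G e) (G e) : ℝ) := (real_inner_self_eq_norm_sq _).symm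
    have h1 : innerM m e e = innerM m v e - innerM m (vseq i) e :=
      innerM_sub_left m v (vseq i) e
    have h2 : (inner ℝ (G e) (G e) : ℝ)
        = (inner ℝ (G v) (G e) : ℝ) - (inner ℝ (G (vseq i)) (G e) : ℝ) := by
      rw [hedef, map_sub, inner_sub_left]
    have h3 : innerM m q e
        = L * (innerM m v e - innerM m (vseq (i - 1)) e)
          - (innerM m (fun j => Z (v j)) e - innerM m (fun j => Z (vseq (i - 1) j)) e) := by
      rw [show innerM m q e = innerM m (fun j => L * w j) e
          - innerM m (fun j => Z (v j) - Z (vseq (i - 1) j)) e from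
          innerM_sub_left m (fun j => L * w j) (fun j => Z (v j) - Z (vseq (i - 1) j)) e,
        innerM_smul_left,
        show innerM m (fun j => Z (v j) - Z (vseq (i - 1) j)) e
          = innerM m (fun j => Z (v j)) e - innerM m (fun j => Z (vseq (i - 1) j)) e from
          innerM_sub_left m _ _ e,
        show innerM m w e = innerM m v e - innerM m (vseq (i - 1)) e from
          innerM_sub_left m v (vseq (i - 1)) e]
    have h4 : innerM m (fun j => L * vseq (i - 1) j - Z (vseq (i - 1) j)) e
        = L * innerM m (vseq (i - 1)) e - innerM m (fun j => Z (vseq (i - 1) j)) e := by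
      rw [show innerM m (fun j => L * vseq (i - 1) j - Z (vseq (i - 1) j)) e
          = innerM m (fun j => L * vseq (i - 1) j) e
            - innerM m (fun j => Z (vseq (i - 1) j)) e from innerM_sub_left m _ _ e,
        innerM_smul_left]
    have hbe := hv e
    have hite := hit i hi e
    rw [h4] at hite
    rw [h1, hGe, h2, h3]
    linarith
  -- norm bound on q
  have hqq : innerM m q q ≤ K ^ 2 * innerM m w w := by
    unfold innerM
    rw [Finset.mul_sum]
    apply Finset.sum_le_sum
    intro j _
    have h2 : q j * q j ≤ K ^ 2 * (w j * w j) := by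
      have h2' := mul_self_le_mul_self (abs_nonneg (q j)) (hq j)
      have e1 : |q j| * |q j| = q j * q j := abs_mul_abs_self _
      have e2 : |w j| * |w j| = w j * w j := abs_mul_abs_self _
      nlinarith [abs_nonneg (w j)]
    calc m j * q j * q j = m j * (q j * q j) := by ring
      _ ≤ m j * (K ^ 2 * (w j * w j)) := mul_le_mul_of_nonneg_left h2 (hm0 j)
      _ = K ^ 2 * (m j * w j * w j) := by ring
  have hqn : normM m q ≤ K * normM m w := by
    unfold normM
    rw [show K * Real.sqrt (innerM m w w) = Real.sqrt (K ^ 2 * innerM m w w) by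
      rw [Real.sqrt_mul (sq_nonneg K), Real.sqrt_sq hK0]]
    exact Real.sqrt_le_sqrt hqq
  -- scalars
  set a : ℝ := normM m e with hadef
  set W : ℝ := normM m w with hWdef
  set A : ℝ := innerM m e e with hAdef
  have hA0 : 0 ≤ A := innerM_self_nonneg m hm0 e
  have ha0 : 0 ≤ a := Real.sqrt_nonneg _
  have hW0 : 0 ≤ W := Real.sqrt_nonneg _
  have ha2 : a ^ 2 = A := Real.sq_sqrt hA0
  set t : ℝ := δt * ‖G e‖ ^ 2 with htdef
  have ht0 : 0 ≤ t := by positivity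
  have h1 : L * A + t ≤ K * W * a := by
    have hcs : innerM m q e ≤ normM m q * normM m e := innerM_le_norm m hm0 q e
    have : normM m q * normM m e ≤ (K * W) * a :=
      mul_le_mul_of_nonneg_right hqn ha0
    linarith [hkey]
  have h2 : P * A ≤ t := by
    have hp := hpoin e
    have hsq : a ^ 2 ≤ C ^ 2 * ‖G e‖ ^ 2 := by nlinarith [norm_nonneg (G e)]
    have hCne : (C : ℝ) ^ 2 ≠ 0 := by positivity
    have : P * A ≤ P * (C ^ 2 * ‖G e‖ ^ 2) := by
      apply mul_le_mul_of_nonneg_left _ hP.le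
      rw [← ha2]; exact hsq
    calc P * A ≤ P * (C ^ 2 * ‖G e‖ ^ 2) := this
      _ = δt * ‖G e‖ ^ 2 := by
        rw [hPdef]; field_simp
  clear_value a W A t
  -- main algebraic inequality
  have hx : (L + P) * a ≤ K * W := by
    rcases eq_or_lt_of_le ha0 with h | h
    · rw [← h, mul_zero]; exact mul_nonneg hK0 hW0
    · have h3 : (L + P) * a ^ 2 ≤ (K * W) * a := by rw [ha2]; linarith
      refine le_of_mul_le_mul_right ?_ h
      calc ((L + P) * a) * a = (L + P) * a ^ 2 := by ring
        _ ≤ (K * W) * a := h3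
  have hmain : L * ((L + P) * A + t) ≤ K ^ 2 * W ^ 2 := by
    nlinarith [mul_nonneg (sub_nonneg.2 hx)
      (add_nonneg (mul_nonneg hK0 hW0) (mul_nonneg hP.le ha0)),
      sq_nonneg (P * a), mul_le_mul_of_nonneg_left h1 hL0.le, ha2]
  -- conclude
  set Nw : ℝ := normX m G L δt C w with hNwdef
  have hNw0 : 0 ≤ Nw := Real.sqrt_nonneg _
  have hNw2 : Nw ^ 2 = (L + P) * W ^ 2 + δt * ‖G w‖ ^ 2 := by
    rw [hNwdef, hPdef, hWdef]
    unfold normX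
    exact Real.sq_sqrt (add_nonneg
      (mul_nonneg (by positivity) (sq_nonneg _)) (by positivity))
  clear_value Nw
  have hfin : (L + P) * A + t ≤ (α * Nw) ^ 2 := by
    have hα2 : (α * Nw) ^ 2 = K ^ 2 * Nw ^ 2 / (L * (L + P)) := by
      rw [mul_pow, hαdef, div_pow, hS2]; ring
    rw [hα2, le_div_iff₀ hLP]
    have hW2 : (L + P) * W ^ 2 ≤ Nw ^ 2 := by nlinarith [norm_nonneg (G w)]
    nlinarith [mul_le_mul_of_nonneg_left hmain (le_of_lt (by linarith : (0:ℝ) < L + P)),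
      mul_le_mul_of_nonneg_left hW2 (sq_nonneg K)]
  calc normX m G L δt C e = Real.sqrt ((L + P) * A + t) := by
        rw [hPdef, htdef, ← ha2, hadef]
        rfl
    _ ≤ Real.sqrt ((α * Nw) ^ 2) := Real.sqrt_le_sqrt hfin
    _ = α * Nw := Real.sqrt_sq (mul_nonneg hα0 hNw0)
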